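/- Let g be a ground truth and p, q predictions of length n, and let α, β be as specified. Suppose A ∈ I_1(g), i* ∈ A, p(i) = q(i) for all i ≠ i*, p(i*) = 1, q(i*) = 0, and |I_1(p_A)| ≤ |I_1(q_A)|. Then LARM(g,p) > LARM(g,q). (LARM satisfies the Maximizing True Positives property.) -/
import Mathlib


namespace TSAD

open Finset

/-- The index domain `{1, …, n}`. -/
def dom (n : ℕ) : Finset ℕ := Finset.Icc 1 n

/-- The interval `[l, u]` represented by a pair. -/
def ivl (W : ℕ × ℕ) : Finset ℕ := Finset.Icc W.1 W.2

/-- The positions in `A` where the binary sequence `s` takes the value `1` (`true`). -/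
def ones (A : Finset ℕ) (s : ℕ → Bool) : Finset ℕ := A.filter (fun i => s i = true)

/-- `runs A s v` is the set of maximal intervals `[l, u] ⊆ A` on which `s` is constantly `v`
(maximal among intervals contained in `A`).  For `A = dom n` this is `I_v(s)`;
for `A ⊆ dom n` it is `I_v(s_A)`. -/
def runs (A : Finset ℕ) (s : ℕ → Bool) (v : Bool) : Finset (ℕ × ℕ) :=
  (A ×ˢ A).filter (fun W =>
    W.1 ≤ W.2 ∧ ivl W ⊆ A ∧ (∀ i ∈ ivl W, s i = v) ∧
    (W.1 - 1 ∈ A → s (W.1 - 1) ≠ v) ∧ (W.2 + 1 ∈ A → s (W.2 + 1) ≠ v))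

/-- Specification of the function `α` used in the (A)LARM scores: it assigns to each
restriction `p_A` a value in `[0,1)`, depends only on the restriction, strictly increases
when a single `0` of `p_A` is changed to a `1`, satisfies alarm timing, and early bias. -/
structure AlphaSpec (α : Finset ℕ → (ℕ → Bool) → ℝ) : Prop where
  mem_Ico : ∀ A p, α A p ∈ Set.Ico (0 : ℝ) 1
  restrict : ∀ A (p q : ℕ → Bool), (∀ i ∈ A, p i = q i) → α A p = α A q
  mono : ∀ A (p q : ℕ → Bool) (i : ℕ), i ∈ A → p i = true → q i = false →
    (∀ j, j ≠ i → p j = q j) → α A q < α A p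
  timing : ∀ A (p q : ℕ → Bool), (ones A p).card = (ones A q).card →
    ∀ (hp : (ones A p).Nonempty) (hq : (ones A q).Nonempty),
      (ones A p).min' hp < (ones A q).min' hq → α A q < α A p
  earlyBias : ∀ A (p q : ℕ → Bool) (i j : ℕ), i ∈ A → j ∈ A → i < j →
    p i = true → p j = false → q i = false → q j = true →
    (∀ k, k ≠ i → k ≠ j → p k = q k) → α A q < α A p

/-- Specification of the function `β` used in the (A)LARM scores: strictly increasing
with values in `[0,1]`. -/
structure BetaSpec (β : ℕ → ℝ) : Prop where
  mem_Icc : ∀ k, β k ∈ Set.Icc (0 : ℝ) 1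
  strictMono : StrictMono β

/-- The LARM score. -/
noncomputable def LARM (n : ℕ) (α : Finset ℕ → (ℕ → Bool) → ℝ) (β : ℕ → ℝ)
    (g p : ℕ → Bool) : ℝ :=
  (1 / ((runs (dom n) g true).card : ℝ)) *
    ∑ A ∈ (runs (dom n) g true).filter (fun A => 0 < (runs (ivl A) p true).card),
      (α (ivl A) p + 1) / 2 ^ ((runs (ivl A) p true).card)
  - 2 * ∑ N ∈ runs (dom n) g false, ((runs (ivl N) p true).card : ℝ)
  - ∑ N ∈ runs (dom n) g false, β ((ones (ivl N) p).card)

/-- `I_{01}(g)`: intervals that are a maximal `0`-run immediately followed by a maximal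
`1`-run. -/
def runs01 (n : ℕ) (g : ℕ → Bool) : Finset (ℕ × ℕ) :=
  ((dom n) ×ˢ (dom n)).filter (fun W =>
    ∃ b ∈ Finset.Ico W.1 W.2,
      (W.1, b) ∈ runs (dom n) g false ∧ (b + 1, W.2) ∈ runs (dom n) g true)

/-- `I_{10}(g)`: intervals that are a maximal `1`-run immediately followed by a maximal
`0`-run. -/
def runs10 (n : ℕ) (g : ℕ → Bool) : Finset (ℕ × ℕ) :=
  ((dom n) ×ˢ (dom n)).filter (fun W =>
    ∃ b ∈ Finset.Ico W.1 W.2,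
      (W.1, b) ∈ runs (dom n) g true ∧ (b + 1, W.2) ∈ runs (dom n) g false)

/-- Early alarms `EA(p,g)`. -/
def EA (n : ℕ) (p g : ℕ → Bool) : Finset (ℕ × ℕ) :=
  ((dom n) ×ˢ (dom n)).filter (fun A =>
    (∃ I ∈ runs01 n g, A ∈ runs (ivl I) p true) ∧
    (∃ i ∈ ivl A, g i = true) ∧ (∃ i ∈ ivl A, g i = false))

/-- Late alarms `LA(p,g)`. -/
def LA (n : ℕ) (p g : ℕ → Bool) : Finset (ℕ × ℕ) :=
  ((dom n) ×ˢ (dom n)).filter (fun A =>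
    (∃ I ∈ runs10 n g, A ∈ runs (ivl I) p true) ∧
    (∃ i ∈ ivl A, g i = true) ∧ (∃ i ∈ ivl A, g i = false))

/-- True false alarms `TA(p,g)`. -/
def TA (n : ℕ) (p g : ℕ → Bool) : Finset (ℕ × ℕ) :=
  (runs (dom n) p true).filter (fun A =>
    (∀ i ∈ ivl A, g i = false) ∧
    ∀ B ∈ EA n p g ∪ LA n p g, ¬ ivl A ⊆ ivl B)

/-- Detected anomalies `DA(p,g)`. -/
def DA (n : ℕ) (p g : ℕ → Bool) : Finset (ℕ × ℕ) :=
  (runs (dom n) g true).filter (fun A =>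
    ∃ B ∈ runs (dom n) p true,
      (ivl B ∩ ivl A).Nonempty ∧
      (B.1 ∈ ivl A ∨ ∀ i ∈ Finset.Ico B.1 A.1, g i = false))

/-- The ALARM score with alarm tolerance `t` (the averaged term is `0` when
`DA(p,g) = ∅`, since in Lean `0 / 0 = 0`). -/
noncomputable def ALARM (n t : ℕ) (α : Finset ℕ → (ℕ → Bool) → ℝ) (β : ℕ → ℝ)
    (g p : ℕ → Bool) : ℝ :=
  ((DA n p g).card : ℝ)
  + (∑ A ∈ DA n p g, (α (ivl A) p + 1) / 2 ^ ((runs (ivl A) p true).card)) /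
      ((DA n p g).card : ℝ)
  - β (((dom n).filter (fun i => p i = true ∧ g i = false)).card)
  - (1 / (t : ℝ)) * (((TA n p g).card : ℝ) + (3 / 2) * ((EA n p g).card : ℝ)
      + (1 / 2) * ((LA n p g).card : ℝ))

/-- Point-wise Recall. -/
noncomputable def recallPW (n : ℕ) (g p : ℕ → Bool) : ℝ :=
  (((dom n).filter (fun i => p i = true ∧ g i = true)).card : ℝ) /
    ((ones (dom n) g).card : ℝ)

/-- Point-wise F1-score. -/
noncomputable def f1PW (n : ℕ) (g p : ℕ → Bool) : ℝ :=
  2 * (((dom n).filter (fun i => p i = true ∧ g i = true)).card : ℝ) /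
    (((ones (dom n) p).card : ℝ) + ((ones (dom n) g).card : ℝ))

/-- Total length of the ground-truth anomaly windows hit by `p`. -/
def Spa (n : ℕ) (g p : ℕ → Bool) : ℕ :=
  ∑ W ∈ (runs (dom n) g true).filter (fun W => ∃ i ∈ ivl W, p i = true), (ivl W).card

/-- Point-adjusted Recall. -/
noncomputable def recallPA (n : ℕ) (g p : ℕ → Bool) : ℝ :=
  ((Spa n g p : ℝ)) / ((ones (dom n) g).card : ℝ)

/-- Point-adjusted F1-score. -/
noncomputable def f1PA (n : ℕ) (g p : ℕ → Bool) : ℝ :=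
  2 * (Spa n g p : ℝ) /
    ((Spa n g p : ℝ) + (((dom n).filter (fun i => p i = true ∧ g i = false)).card : ℝ)
      + ((ones (dom n) g).card : ℝ))

/-- Point-wise Precision. -/
noncomputable def precisionPW (n : ℕ) (g p : ℕ → Bool) : ℝ :=
  (((dom n).filter (fun i => p i = true ∧ g i = true)).card : ℝ) /
    ((ones (dom n) p).card : ℝ)

/-- Event-wise Recall. -/
noncomputable def recallEvent (n : ℕ) (g p : ℕ → Bool) : ℝ :=
  (((runs (dom n) g true).filter (fun W => ∃ i ∈ ivl W, p i = true)).card : ℝ) /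
    ((runs (dom n) g true).card : ℝ)

/-- Composite F1-score. -/
noncomputable def Fc1 (n : ℕ) (g p : ℕ → Bool) : ℝ :=
  2 * precisionPW n g p * recallEvent n g p / (precisionPW n g p + recallEvent n g p)

/-- Distance from `i` to the closest element of `S`. -/
noncomputable def minDist (i : ℕ) (S : Finset ℕ) : ℕ :=
  sInf {d : ℕ | ∃ j ∈ S, d = ((i : ℤ) - (j : ℤ)).natAbs}

/-- Temporal Distance. -/
noncomputable def TD (n : ℕ) (g p : ℕ → Bool) : ℕ :=
  ∑ i ∈ ones (dom n) g, minDist i (ones (dom n) p)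
  + ∑ i ∈ ones (dom n) p, minDist i (ones (dom n) g)

/-- The set of ground-truth anomaly windows hit by `p`. -/
def Dset (n : ℕ) (g p : ℕ → Bool) : Finset (ℕ × ℕ) :=
  (runs (dom n) g true).filter (fun W => ∃ i ∈ ivl W, p i = true)

/-- Delay of the first alarm of `p` within the window `W`. -/
noncomputable def delay (p : ℕ → Bool) (W : ℕ × ℕ) : ℕ :=
  sInf {i : ℕ | i ∈ ivl W ∧ p i = true} - W.1

/-- Average Alert Delay. -/
noncomputable def AAD (n : ℕ) (g p : ℕ → Bool) : ℝ :=
  (∑ W ∈ Dset n g p, (delay p W : ℝ)) / ((Dset n g p).card : ℝ)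


lemma mem_runs {B : Finset ℕ} {s : ℕ → Bool} {v : Bool} {W : ℕ × ℕ} :
    W ∈ runs B s v ↔ W.1 ∈ B ∧ W.2 ∈ B ∧ W.1 ≤ W.2 ∧ ivl W ⊆ B ∧
      (∀ i ∈ ivl W, s i = v) ∧ (W.1 - 1 ∈ B → s (W.1 - 1) ≠ v) ∧
      (W.2 + 1 ∈ B → s (W.2 + 1) ≠ v) := by
  simp [runs, Finset.mem_filter, Finset.mem_product, and_assoc]

lemma runs_subset {B : Finset ℕ} {p q : ℕ → Bool} {v : Bool}
    (h : ∀ i ∈ B, p i = q i) : runs B p v ⊆ runs B q v := by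
  intro W hW
  rw [mem_runs] at hW ⊢
  obtain ⟨h1, h2, h3, h4, h5, h6, h7⟩ := hW
  exact ⟨h1, h2, h3, h4, fun i hi => (h i (h4 hi)) ▸ h5 i hi,
    fun hm => (h _ hm) ▸ h6 hm, fun hm => (h _ hm) ▸ h7 hm⟩

lemma runs_congr {B : Finset ℕ} {p q : ℕ → Bool} (v : Bool)
    (h : ∀ i ∈ B, p i = q i) : runs B p v = runs B q v :=
  Finset.Subset.antisymm (runs_subset h) (runs_subset (fun i hi => (h i hi).symm))

lemma ones_congr {B : Finset ℕ} {p q : ℕ → Bool}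
    (h : ∀ i ∈ B, p i = q i) : ones B p = ones B q := by
  unfold ones
  apply Finset.filter_congr
  intro i hi; simp [h i hi]

lemma runs_not_lt_left {B : Finset ℕ} {s : ℕ → Bool} {v : Bool} {W₁ W₂ : ℕ × ℕ}
    (h₁ : W₁ ∈ runs B s v) (h₂ : W₂ ∈ runs B s v) {i : ℕ}
    (hi₁ : i ∈ ivl W₁) (hi₂ : i ∈ ivl W₂) : ¬ (W₁.1 < W₂.1) := by
  intro hlt
  rw [mem_runs] at h₁ h₂
  rw [ivl, Finset.mem_Icc] at hi₁ hi₂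
  have hmem : W₂.1 - 1 ∈ ivl W₁ := by
    rw [ivl, Finset.mem_Icc]
    exact ⟨Nat.le_sub_one_of_lt hlt, le_trans (Nat.sub_le _ _) (le_trans hi₂.1 hi₁.2)⟩
  exact h₂.2.2.2.2.2.1 (h₁.2.2.2.1 hmem) (h₁.2.2.2.2.1 _ hmem)

lemma runs_not_lt_right {B : Finset ℕ} {s : ℕ → Bool} {v : Bool} {W₁ W₂ : ℕ × ℕ}
    (h₁ : W₁ ∈ runs B s v) (h₂ : W₂ ∈ runs B s v) {i : ℕ}
    (hi₁ : i ∈ ivl W₁) (hi₂ : i ∈ ivl W₂) : ¬ (W₁.2 < W₂.2) := by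
  intro hlt
  rw [mem_runs] at h₁ h₂
  rw [ivl, Finset.mem_Icc] at hi₁ hi₂
  have hmem : W₁.2 + 1 ∈ ivl W₂ := by
    rw [ivl, Finset.mem_Icc]
    exact ⟨le_trans hi₂.1 (le_trans hi₁.2 (Nat.le_succ _)), hlt⟩
  exact h₁.2.2.2.2.2.2 (h₂.2.2.2.1 hmem) (h₂.2.2.2.2.1 _ hmem)

lemma runs_eq_of_mem {B : Finset ℕ} {s : ℕ → Bool} {v : Bool} {W₁ W₂ : ℕ × ℕ}
    (h₁ : W₁ ∈ runs B s v) (h₂ : W₂ ∈ runs B s v) {i : ℕ}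
    (hi₁ : i ∈ ivl W₁) (hi₂ : i ∈ ivl W₂) : W₁ = W₂ := by
  have e1 : W₁.1 = W₂.1 :=
    le_antisymm (not_lt.mp (runs_not_lt_left h₂ h₁ hi₂ hi₁))
      (not_lt.mp (runs_not_lt_left h₁ h₂ hi₁ hi₂))
  have e2 : W₁.2 = W₂.2 :=
    le_antisymm (not_lt.mp (runs_not_lt_right h₂ h₁ hi₂ hi₁))
      (not_lt.mp (runs_not_lt_right h₁ h₂ hi₁ hi₂))
  exact Prod.ext e1 e2

lemma runs_nonempty {l u : ℕ} (hl : 1 ≤ l) {s : ℕ → Bool} {v : Bool} {i : ℕ}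
    (hil : l ≤ i) (hiu : i ≤ u) (hsv : s i = v) :
    ∃ W, W ∈ runs (Finset.Icc l u) s v := by
  classical
  set S : Set ℕ := {a | l ≤ a ∧ ∀ j, a ≤ j → j ≤ i → s j = v} with hS
  have hiS : i ∈ S := ⟨hil, fun j hj hj' => (le_antisymm hj' hj) ▸ hsv⟩
  set a := sInf S with ha
  have haS : a ∈ S := Nat.sInf_mem ⟨i, hiS⟩
  have hai : a ≤ i := Nat.sInf_le hiS
  set P : ℕ → Prop := fun b => ∀ j, i ≤ j → j ≤ b → s j = v with hP
  have hPi : P i := fun j hj hj' => (le_antisymm hj' hj) ▸ hsv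
  set b := Nat.findGreatest P u with hb
  have hib : i ≤ b := Nat.le_findGreatest hiu hPi
  have hbu : b ≤ u := Nat.findGreatest_le u
  have hPb : P b := Nat.findGreatest_spec hiu hPi
  refine ⟨(a, b), mem_runs.mpr ⟨?_, ?_, le_trans hai hib, ?_, ?_, ?_, ?_⟩⟩
  · exact Finset.mem_Icc.mpr ⟨haS.1, le_trans hai (le_trans hib hbu)⟩
  · exact Finset.mem_Icc.mpr ⟨le_trans haS.1 (le_trans hai hib), hbu⟩
  · exact Finset.Icc_subset_Icc haS.1 hbu
  · intro j hj
    rw [ivl, Finset.mem_Icc] at hj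
    rcases le_or_gt j i with h | h
    · exact haS.2 j hj.1 h
    · exact hPb j h.le hj.2
  · intro hm hv
    rw [Finset.mem_Icc] at hm
    have ha1 : 1 ≤ a := le_trans hl haS.1
    have : (a : ℕ) - 1 ∈ S := by
      refine ⟨hm.1, fun j hj hj' => ?_⟩
      rcases le_or_gt a j with h | h
      · exact haS.2 j h hj'
      · have : j = a - 1 := le_antisymm (Nat.le_sub_one_of_lt h) hj
        rw [this]; exact hv
    have := Nat.sInf_le this
    omega
  · intro hm hv
    rw [Finset.mem_Icc] at hm
    have : P (b + 1) := by
      intro j hj hj'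
      rcases eq_or_lt_of_le hj' with h | h
      · rw [h]; exact hv
      · exact hPb j hj (Nat.lt_succ_iff.mp h)
    have := Nat.le_findGreatest hm.2 this
    omega


/-- LARM satisfies the Maximizing True Positives property (Property 7). -/
theorem larm_max_true_positives (n : ℕ) (hn : 1 ≤ n)
    (α : Finset ℕ → (ℕ → Bool) → ℝ) (β : ℕ → ℝ)
    (hα : AlphaSpec α) (hβ : BetaSpec β)
    (g p q : ℕ → Bool) (A : ℕ × ℕ) (hA : A ∈ runs (dom n) g true)
    (iStar : ℕ) (hi : iStar ∈ ivl A)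
    (hpq : ∀ i ∈ dom n, i ≠ iStar → p i = q i)
    (hpi : p iStar = true) (hqi : q iStar = false)
    (hcard : (runs (ivl A) p true).card ≤ (runs (ivl A) q true).card) :
    LARM n α β g p > LARM n α β g q := by
  classical
  set T := runs (dom n) g true with hTdef
  obtain ⟨hA1, hA2, hAle, hAsub, hAval, _, _⟩ := mem_runs.mp hA
  have hgstar : g iStar = true := hAval iStar hi
  -- p = q on other true runs
  have hkey : ∀ A' ∈ T, A' ≠ A → (∀ i ∈ ivl A', p i = q i) := by
    intro A' hA' hne i hiA'
    by_cases h : i = iStar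
    · exact absurd (runs_eq_of_mem hA' hA (h ▸ hiA') hi) hne
    · exact hpq i ((mem_runs.mp hA').2.2.2.1 hiA') h
  -- p = q on false runs
  have hfalse : ∀ N ∈ runs (dom n) g false, (∀ i ∈ ivl N, p i = q i) := by
    intro N hN i hiN
    refine hpq i ((mem_runs.mp hN).2.2.2.1 hiN) (fun h => ?_)
    have := (mem_runs.mp hN).2.2.2.2.1 i hiN
    rw [h, hgstar] at this
    exact Bool.true_eq_false ▸ (by simp at this)
  -- positivity of p's alarm count on A
  have hA1' : 1 ≤ A.1 := (Finset.mem_Icc.mp hA1).1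
  have hiIcc := Finset.mem_Icc.mp hi
  have hcp : 0 < (runs (ivl A) p true).card := by
    obtain ⟨W, hW⟩ := runs_nonempty hA1' hiIcc.1 hiIcc.2 hpi
    exact Finset.card_pos.mpr ⟨W, hW⟩
  -- alpha inequality
  have halpha : α (ivl A) q < α (ivl A) p := by
    set q' : ℕ → Bool := fun i => if i = iStar then false else p i with hq'
    have h1 : α (ivl A) q' < α (ivl A) p :=
      hα.mono (ivl A) p q' iStar hi hpi (by simp [hq'])
        (fun j hj => by simp [hq', hj])
    have h2 : α (ivl A) q' = α (ivl A) q := by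
      refine hα.restrict _ _ _ (fun i hiA => ?_)
      by_cases h : i = iStar
      · rw [h]; simp [hq', hqi]
      · simp [hq', h, hpq i (hAsub hiA) h]
    linarith
  have hαp0 := (hα.mem_Ico (ivl A) p).1
  have hαq1 := (hα.mem_Ico (ivl A) q).2
  -- abbreviations
  set Fp := T.filter (fun A' => 0 < (runs (ivl A') p true).card) with hFp
  set Fq := T.filter (fun A' => 0 < (runs (ivl A') q true).card) with hFq
  set fp : ℕ × ℕ → ℝ :=
    fun A' => (α (ivl A') p + 1) / 2 ^ ((runs (ivl A') p true).card) with hfp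
  set fq : ℕ × ℕ → ℝ :=
    fun A' => (α (ivl A') q + 1) / 2 ^ ((runs (ivl A') q true).card) with hfq
  have hAFp : A ∈ Fp := Finset.mem_filter.mpr ⟨hA, hcp⟩
  have herase : Fp.erase A = Fq.erase A := by
    ext A'
    simp only [Finset.mem_erase, Finset.mem_filter, hFp, hFq]
    constructor
    · rintro ⟨hne, hA', hpos⟩
      exact ⟨hne, hA', by rwa [← runs_congr true (hkey A' hA' hne)]⟩
    · rintro ⟨hne, hA', hpos⟩
      exact ⟨hne, hA', by rwa [runs_congr true (hkey A' hA' hne)]⟩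
  have hsame : ∀ A' ∈ Fq.erase A, fp A' = fq A' := by
    intro A' hA'
    obtain ⟨hne, hA'T, -⟩ :
        A' ≠ A ∧ A' ∈ T ∧ 0 < (runs (ivl A') q true).card := by
      have := Finset.mem_erase.mp hA'
      exact ⟨this.1, (Finset.mem_filter.mp this.2).1, (Finset.mem_filter.mp this.2).2⟩
    simp only [hfp, hfq]
    rw [runs_congr true (hkey A' hA'T hne), hα.restrict _ _ _ (hkey A' hA'T hne)]
  have hSp : ∑ A' ∈ Fp, fp A' = fp A + ∑ A' ∈ Fq.erase A, fq A' := by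
    rw [← Finset.add_sum_erase Fp fp hAFp, herase]
    exact congrArg _ (Finset.sum_congr rfl hsame)
  have hSq : ∑ A' ∈ Fq, fq A'
      = (if A ∈ Fq then fq A else 0) + ∑ A' ∈ Fq.erase A, fq A' := by
    by_cases hmem : A ∈ Fq
    · rw [if_pos hmem, Finset.add_sum_erase Fq fq hmem]
    · rw [if_neg hmem, Finset.erase_eq_of_notMem hmem, zero_add]
  -- the key strict inequality between the A-terms
  have hterm : (if A ∈ Fq then fq A else 0) < fp A := by
    by_cases hmem : A ∈ Fq
    · rw [if_pos hmem]
      simp only [hfp, hfq]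
      have h2 : (2:ℝ) ^ ((runs (ivl A) p true).card)
          ≤ 2 ^ ((runs (ivl A) q true).card) :=
        pow_le_pow_right₀ one_le_two hcard
      have hp2 : (0:ℝ) < 2 ^ ((runs (ivl A) p true).card) := by positivity
      calc (α (ivl A) q + 1) / 2 ^ ((runs (ivl A) q true).card)
          ≤ (α (ivl A) q + 1) / 2 ^ ((runs (ivl A) p true).card) := by
            apply div_le_div_of_nonneg_left _ hp2 h2
            linarith [(hα.mem_Ico (ivl A) q).1]
        _ < (α (ivl A) p + 1) / 2 ^ ((runs (ivl A) p true).card) := by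
            apply div_lt_div_of_pos_right _ hp2
            linarith
    · rw [if_neg hmem]
      simp only [hfp]
      positivity
  -- the low-order sums agree
  have hs2 : ∑ N ∈ runs (dom n) g false, ((runs (ivl N) p true).card : ℝ)
      = ∑ N ∈ runs (dom n) g false, ((runs (ivl N) q true).card : ℝ) :=
    Finset.sum_congr rfl (fun N hN => by rw [runs_congr true (hfalse N hN)])
  have hs3 : ∑ N ∈ runs (dom n) g false, β ((ones (ivl N) p).card)
      = ∑ N ∈ runs (dom n) g false, β ((ones (ivl N) q).card) :=
    Finset.sum_congr rfl (fun N hN => by rw [ones_congr (hfalse N hN)])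
  have hcT : (0:ℝ) < (T.card : ℝ) := by
    exact_mod_cast Finset.card_pos.mpr ⟨A, hA⟩
  have hdiff : LARM n α β g p - LARM n α β g q
      = (1 / (T.card : ℝ)) * (fp A - (if A ∈ Fq then fq A else 0)) := by
    unfold LARM
    rw [hs2, hs3]
    rw [show (∑ A' ∈ (runs (dom n) g true).filter
        (fun A' => 0 < (runs (ivl A') p true).card),
        (α (ivl A') p + 1) / 2 ^ ((runs (ivl A') p true).card)) = ∑ A' ∈ Fp, fp A' from rfl]
    rw [show (∑ A' ∈ (runs (dom n) g true).filter
        (fun A' => 0 < (runs (ivl A') q true).card),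
        (α (ivl A') q + 1) / 2 ^ ((runs (ivl A') q true).card)) = ∑ A' ∈ Fq, fq A' from rfl]
    rw [hSp, hSq]
    ring
  have : 0 < LARM n α β g p - LARM n α β g q := by
    rw [hdiff]
    apply mul_pos (by positivity)
    linarith
  linarith


end TSAD
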